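/- Let B be a real m × n matrix, E and E' diagonal real m × m matrices, d ∈ ℝᵐ, ε ≥ 0, and Λ = diag(λⱼ) with 0 ≤ λⱼ ≤ 1. Suppose the matrix K_ε := BᵀEB + ε BᵀE'ΛB is invertible and that ε · ‖BᵀE'‖ · (max_j max(λⱼ, 1 − λⱼ)) · ‖B‖ · ‖K_ε⁻¹‖ < 1 (Euclidean operator norms). Then for every Y ∈ ℝⁿ the equilibrium equation BᵀEBu + ε BᵀE'(Bu + d)₋ = Y has a solution u* ∈ ℝⁿ, and the iteration K_ε u^{k+1} + ε BᵀE'Λ d = Y − ε BᵀE'[(Bu^k + d)₋ − Λ(Bu^k + d)] converges geometrically to u* from any starting point u⁰. -/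

import Mathlib

/-!
Since `min(a, 0) − λa = (1/2 − λ)a − |a|/2`, the remainder `r(v) = v₋ − Λv` is componentwise
Lipschitz with constant `max(λⱼ, 1 − λⱼ)`. Hence the iteration map
`u ↦ K_ε⁻¹(Y − εBᵀE'Λd − εBᵀE' r(Bu + d))` is a contraction of `(ℝⁿ, ‖·‖₂)` with constant
`ε ‖BᵀE'‖ (maxⱼ max(λⱼ, 1 − λⱼ)) ‖B‖ ‖K_ε⁻¹‖ < 1`. By Banach's theorem it has a fixed
point, to which the iterates converge geometrically, and since `K_ε u − εBᵀE'ΛBu = BᵀEBu`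
a fixed point solves the equilibrium equation.
-/

open Matrix Filter

/-- Euclidean (ℓ²) operator norm of a real matrix. -/
noncomputable def matrixL2OpNorm' {m n : ℕ} (A : Matrix (Fin m) (Fin n) ℝ) : ℝ :=
  ‖LinearMap.toContinuousLinearMap (Matrix.toEuclideanLin A)‖

/-- Euclidean norm of a vector of `ℝⁿ`. -/
noncomputable def eucNorm {n : ℕ} (v : Fin n → ℝ) : ℝ :=
  ‖(EuclideanSpace.equiv (Fin n) ℝ).symm v‖

open Topology

section EuclideanNorm

variable {n : ℕ}

lemma matrixL2OpNorm'_nonneg {m : ℕ} (A : Matrix (Fin m) (Fin n) ℝ) :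
    0 ≤ matrixL2OpNorm' A :=
  norm_nonneg _

lemma eucNorm_nonneg (v : Fin n → ℝ) : 0 ≤ eucNorm v :=
  norm_nonneg _

lemma eucNorm_sub_eq_dist (u v : Fin n → ℝ) :
    eucNorm (u - v) = dist (WithLp.toLp 2 u) (WithLp.toLp 2 v) := by
  rw [dist_eq_norm, ← WithLp.toLp_sub]
  rfl

lemma eucNorm_sub_comm (u v : Fin n → ℝ) : eucNorm (u - v) = eucNorm (v - u) := by
  rw [eucNorm_sub_eq_dist, dist_comm, ← eucNorm_sub_eq_dist]

lemma eucNorm_smul (c : ℝ) (v : Fin n → ℝ) : eucNorm (c • v) = |c| * eucNorm v := by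
  rw [eucNorm, map_smul, norm_smul, Real.norm_eq_abs]
  rfl

lemma eucNorm_mulVec_le {m : ℕ} (A : Matrix (Fin m) (Fin n) ℝ) (x : Fin n → ℝ) :
    eucNorm (A *ᵥ x) ≤ matrixL2OpNorm' A * eucNorm x :=
  (LinearMap.toContinuousLinearMap (toEuclideanLin A)).le_opNorm (WithLp.toLp 2 x)

lemma eucNorm_le_mul_of_abs_le {v w : Fin n → ℝ} {c : ℝ} (hc : 0 ≤ c)
    (h : ∀ j, |v j| ≤ c * |w j|) : eucNorm v ≤ c * eucNorm w := by
  rw [← abs_of_nonneg hc, ← eucNorm_smul, eucNorm, eucNorm, EuclideanSpace.norm_eq,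
    EuclideanSpace.norm_eq]
  refine Real.sqrt_le_sqrt (Finset.sum_le_sum fun j _ => ?_)
  simpa [abs_mul, abs_of_nonneg hc] using pow_le_pow_left₀ (abs_nonneg _) (h j) 2

end EuclideanNorm

section Contraction

variable {n : ℕ} {G : (Fin n → ℝ) → Fin n → ℝ} {q : ℝ}

lemma exists_fixedPoint_of_eucNorm_contraction (hq0 : 0 ≤ q) (hq1 : q < 1)
    (hG : ∀ u v, eucNorm (G u - G v) ≤ q * eucNorm (u - v)) : ∃ x, G x = x := by
  let g : EuclideanSpace ℝ (Fin n) → EuclideanSpace ℝ (Fin n) :=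
    fun x => WithLp.toLp 2 (G (WithLp.ofLp x))
  have hg : ContractingWith ⟨q, hq0⟩ g := by
    refine ⟨by exact_mod_cast hq1, LipschitzWith.of_dist_le_mul fun x y => ?_⟩
    have h := hG (WithLp.ofLp x) (WithLp.ofLp y)
    rwa [eucNorm_sub_eq_dist, eucNorm_sub_eq_dist, WithLp.toLp_ofLp, WithLp.toLp_ofLp] at h
  refine ⟨WithLp.ofLp (ContractingWith.fixedPoint g hg), ?_⟩
  simpa [g] using congrArg WithLp.ofLp hg.fixedPoint_isFixedPt

lemma eucNorm_sub_fixedPoint_le (hq0 : 0 ≤ q)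
    (hG : ∀ u v, eucNorm (G u - G v) ≤ q * eucNorm (u - v)) {x : Fin n → ℝ} (hx : G x = x)
    {u : ℕ → Fin n → ℝ} (hu : ∀ k, u (k + 1) = G (u k)) (k : ℕ) :
    eucNorm (u k - x) ≤ eucNorm (u 0 - x) * q ^ k := by
  induction k with
  | zero => simp
  | succ k ih =>
    calc eucNorm (u (k + 1) - x) = eucNorm (G (u k) - G x) := by rw [hu k, hx]
      _ ≤ q * eucNorm (u k - x) := hG _ _
      _ ≤ q * (eucNorm (u 0 - x) * q ^ k) := by gcongr
      _ = eucNorm (u 0 - x) * q ^ (k + 1) := by ring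

lemma tendsto_of_eucNorm_sub_le {u : ℕ → Fin n → ℝ} {x : Fin n → ℝ} {C : ℝ} (hq0 : 0 ≤ q)
    (hq1 : q < 1) (h : ∀ k, eucNorm (u k - x) ≤ C * q ^ k) : Tendsto u atTop (𝓝 x) := by
  have hlim : Tendsto (fun k => WithLp.toLp 2 (u k)) atTop (𝓝 (WithLp.toLp 2 x)) := by
    refine tendsto_iff_dist_tendsto_zero.2 (squeeze_zero (fun _ => dist_nonneg) (fun k => ?_)
      (by simpa using (tendsto_pow_atTop_nhds_zero_of_lt_one hq0 hq1).const_mul C))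
    rw [← eucNorm_sub_eq_dist]
    exact h k
  exact ((PiLp.continuous_ofLp 2 _).tendsto _).comp hlim

end Contraction

section QuasiNewton

variable {m n : ℕ}

def negPartRemainder (lam v : Fin m → ℝ) : Fin m → ℝ :=
  (fun j => min (v j) 0) - diagonal lam *ᵥ v

lemma abs_min_zero_sub_mul_sub_le (l a b : ℝ) :
    |min a 0 - l * a - (min b 0 - l * b)| ≤ max l (1 - l) * |a - b| := by
  have hmin : ∀ x : ℝ, min x 0 = (x - |x|) / 2 := fun x => by
    rcases le_total x 0 with h | h
    · rw [min_eq_left h, abs_of_nonpos h]; ring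
    · rw [min_eq_right h, abs_of_nonneg h]; ring
  have hmax : max l (1 - l) = |1 / 2 - l| + 1 / 2 := by
    rcases le_total l (1 / 2) with h | h
    · rw [abs_of_nonneg (by linarith), max_eq_right (by linarith)]; ring
    · rw [abs_of_nonpos (by linarith), max_eq_left (by linarith)]; ring
  have habs : |(|a| - |b|) / 2| ≤ |a - b| / 2 := by
    rw [abs_div, abs_two]
    linarith [abs_abs_sub_abs_le_abs_sub a b]
  calc |min a 0 - l * a - (min b 0 - l * b)|
      = |(1 / 2 - l) * (a - b) - (|a| - |b|) / 2| := by rw [hmin a, hmin b]; congr 1; ring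
    _ ≤ |1 / 2 - l| * |a - b| + |(|a| - |b|) / 2| := by rw [← abs_mul]; exact abs_sub _ _
    _ ≤ max l (1 - l) * |a - b| := by rw [hmax]; linarith

lemma eucNorm_negPartRemainder_sub_le {lam : Fin m → ℝ} {μ : ℝ} (hμ0 : 0 ≤ μ)
    (hμ : ∀ j, max (lam j) (1 - lam j) ≤ μ) (v w : Fin m → ℝ) :
    eucNorm (negPartRemainder lam v - negPartRemainder lam w) ≤ μ * eucNorm (v - w) := by
  refine eucNorm_le_mul_of_abs_le hμ0 fun j => ?_
  simpa [negPartRemainder, mulVec_diagonal] using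
    (abs_min_zero_sub_mul_sub_le (lam j) (v j) (w j)).trans
      (mul_le_mul_of_nonneg_right (hμ j) (abs_nonneg _))

variable (B : Matrix (Fin m) (Fin n) ℝ) (N : Matrix (Fin n) (Fin m) ℝ)
  (K : Matrix (Fin n) (Fin n) ℝ) (d lam : Fin m → ℝ) (ε : ℝ) (Y : Fin n → ℝ)

noncomputable def quasiNewtonStep (u : Fin n → ℝ) : Fin n → ℝ :=
  K⁻¹ *ᵥ (Y - ε • N *ᵥ (diagonal lam *ᵥ d) - ε • N *ᵥ negPartRemainder lam (B *ᵥ u + d))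

variable {B N K d lam ε Y}

lemma quasiNewtonStep_eq_iff (hK : IsUnit K) {u w : Fin n → ℝ} :
    quasiNewtonStep B N K d lam ε Y u = w ↔
      K *ᵥ w + ε • N *ᵥ (diagonal lam *ᵥ d) = Y - ε • N *ᵥ negPartRemainder lam (B *ᵥ u + d) := by
  have hdet := (isUnit_iff_isUnit_det K).mp hK
  rw [← eq_sub_iff_add_eq, quasiNewtonStep]
  constructor
  · rintro rfl
    rw [mulVec_mulVec, mul_nonsing_inv K hdet, one_mulVec, sub_right_comm]
  · intro h
    rw [sub_right_comm, ← h, mulVec_mulVec, nonsing_inv_mul K hdet, one_mulVec]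

lemma eucNorm_quasiNewtonStep_sub_le (hε : 0 ≤ ε) {μ : ℝ} (hμ0 : 0 ≤ μ)
    (hμ : ∀ j, max (lam j) (1 - lam j) ≤ μ) (u v : Fin n → ℝ) :
    eucNorm (quasiNewtonStep B N K d lam ε Y u - quasiNewtonStep B N K d lam ε Y v) ≤
      ε * matrixL2OpNorm' N * μ * matrixL2OpNorm' B * matrixL2OpNorm' K⁻¹ *
        eucNorm (u - v) := by
  set r := negPartRemainder lam
  have hdiff : quasiNewtonStep B N K d lam ε Y u - quasiNewtonStep B N K d lam ε Y v =
      K⁻¹ *ᵥ (ε • N *ᵥ (r (B *ᵥ v + d) - r (B *ᵥ u + d))) := by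
    simp only [quasiNewtonStep, mulVec_sub, mulVec_smul, smul_sub, r]
    abel
  have hr : eucNorm (r (B *ᵥ v + d) - r (B *ᵥ u + d)) ≤
      μ * (matrixL2OpNorm' B * eucNorm (u - v)) := by
    rw [eucNorm_sub_comm u v]
    have h := eucNorm_negPartRemainder_sub_le hμ0 hμ (B *ᵥ v + d) (B *ᵥ u + d)
    rw [add_sub_add_right_eq_sub, ← mulVec_sub] at h
    exact h.trans (mul_le_mul_of_nonneg_left (eucNorm_mulVec_le B _) hμ0)
  calc _ ≤ matrixL2OpNorm' K⁻¹ *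
        (ε * (matrixL2OpNorm' N * (μ * (matrixL2OpNorm' B * eucNorm (u - v))))) := by
        rw [hdiff]
        refine (eucNorm_mulVec_le _ _).trans
          (mul_le_mul_of_nonneg_left ?_ (matrixL2OpNorm'_nonneg _))
        rw [eucNorm_smul, abs_of_nonneg hε]
        refine mul_le_mul_of_nonneg_left ((eucNorm_mulVec_le _ _).trans ?_) hε
        exact mul_le_mul_of_nonneg_left hr (matrixL2OpNorm'_nonneg _)
    _ = _ := by ring

lemma equilibrium_of_quasiNewtonStep_eq_self {A : Matrix (Fin n) (Fin n) ℝ}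
    (hKdef : K = A + ε • (N * diagonal lam * B)) (hK : IsUnit K) {u : Fin n → ℝ}
    (hu : quasiNewtonStep B N K d lam ε Y u = u) :
    A *ᵥ u + ε • N *ᵥ (fun j => min ((B *ᵥ u + d) j) 0) = Y := by
  have h := (quasiNewtonStep_eq_iff hK).mp hu
  rw [hKdef, add_mulVec, smul_mulVec, ← mulVec_mulVec, ← mulVec_mulVec, negPartRemainder] at h
  simp only [mulVec_sub, mulVec_add, smul_sub, smul_add] at h
  rw [← sub_eq_zero, ← sub_eq_zero_of_eq h]
  abel

end QuasiNewton

theorem stmt_3_general {m n : ℕ} (B : Matrix (Fin m) (Fin n) ℝ) (E E' d lam : Fin m → ℝ)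
    (ε : ℝ) (hε : 0 ≤ ε)
    (Kε : Matrix (Fin n) (Fin n) ℝ)
    (hKdef : Kε = Bᵀ * Matrix.diagonal E * B
      + ε • (Bᵀ * Matrix.diagonal E' * Matrix.diagonal lam * B))
    (hKunit : IsUnit Kε)
    (hcontr : ε * matrixL2OpNorm' (Bᵀ * Matrix.diagonal E')
        * (⨆ j, max (lam j) (1 - lam j)) * matrixL2OpNorm' B * matrixL2OpNorm' Kε⁻¹ < 1) :
    ∀ Y : Fin n → ℝ, ∃ ustar : Fin n → ℝ,
      ((Bᵀ * Matrix.diagonal E * B).mulVec ustar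
        + ε • (Bᵀ * Matrix.diagonal E').mulVec
            (fun j => min ((B.mulVec ustar + d) j) 0) = Y) ∧
      ∀ u : ℕ → Fin n → ℝ,
        (∀ k : ℕ,
          Kε.mulVec (u (k + 1))
            + ε • (Bᵀ * Matrix.diagonal E').mulVec ((Matrix.diagonal lam).mulVec d)
          = Y - ε • (Bᵀ * Matrix.diagonal E').mulVec
              ((fun j => min ((B.mulVec (u k) + d) j) 0)
                - (Matrix.diagonal lam).mulVec (B.mulVec (u k) + d))) →
        Tendsto u atTop (nhds ustar) ∧
        ∃ C : ℝ, 0 ≤ C ∧ ∃ q : ℝ, q ∈ Set.Ico (0:ℝ) 1 ∧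
          ∀ k : ℕ, eucNorm (u k - ustar) ≤ C * q ^ k := by
  intro Y
  set μ := ⨆ j, max (lam j) (1 - lam j)
  have hμ : ∀ j, max (lam j) (1 - lam j) ≤ μ := le_ciSup (Set.finite_range _).bddAbove
  have hμ0 : 0 ≤ μ := Real.iSup_nonneg fun j => by
    rcases le_total 0 (lam j) with h | h
    exacts [le_max_of_le_left h, le_max_of_le_right (by linarith)]
  have hq0 : 0 ≤ ε * matrixL2OpNorm' (Bᵀ * diagonal E') * μ * matrixL2OpNorm' B *
      matrixL2OpNorm' Kε⁻¹ := by
    have := matrixL2OpNorm'_nonneg (Bᵀ * diagonal E')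
    have := matrixL2OpNorm'_nonneg B
    have := matrixL2OpNorm'_nonneg Kε⁻¹
    positivity
  set G := quasiNewtonStep B (Bᵀ * diagonal E') Kε d lam ε Y
  have hG : ∀ u v, eucNorm (G u - G v) ≤ _ * eucNorm (u - v) :=
    eucNorm_quasiNewtonStep_sub_le hε hμ0 hμ
  obtain ⟨ustar, hfix⟩ := exists_fixedPoint_of_eucNorm_contraction hq0 hcontr hG
  refine ⟨ustar, equilibrium_of_quasiNewtonStep_eq_self hKdef hKunit hfix, fun u hu => ?_⟩
  have hstep : ∀ k, u (k + 1) = G (u k) :=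
    fun k => ((quasiNewtonStep_eq_iff hKunit).mpr (hu k)).symm
  have hdecay := eucNorm_sub_fixedPoint_le hq0 hG hfix hstep
  exact ⟨tendsto_of_eucNorm_sub_le hq0 hcontr hdecay, _, eucNorm_nonneg _, _, ⟨hq0, hcontr⟩,
    hdecay⟩

/-- Static equilibrium with weak unilateral springs: if `K_ε = BᵀEB + εBᵀE'ΛB` is
invertible and `ε ‖BᵀE'‖ (max_j max(λⱼ,1−λⱼ)) ‖B‖ ‖K_ε⁻¹‖ < 1`, then for every load `Y`
the equation `BᵀEBu + εBᵀE'(Bu + d)₋ = Y` has a solution, and the quasi-Newton iteration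
`K_ε u^{k+1} + εBᵀE'Λd = Y − εBᵀE'[(Bu^k + d)₋ − Λ(Bu^k + d)]` converges to it
geometrically from any starting point. Here `z₋ = min(z,0)` componentwise,
`E, E', Λ` are the diagonal matrices of the vectors `E, E', λ`. -/
theorem stmt_3 {m n : ℕ} (B : Matrix (Fin m) (Fin n) ℝ) (E E' d lam : Fin m → ℝ)
    (ε : ℝ) (hε : 0 ≤ ε) (hlam : ∀ j, lam j ∈ Set.Icc (0:ℝ) 1)
    (Kε : Matrix (Fin n) (Fin n) ℝ)
    (hKdef : Kε = Bᵀ * Matrix.diagonal E * B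
      + ε • (Bᵀ * Matrix.diagonal E' * Matrix.diagonal lam * B))
    (hKunit : IsUnit Kε)
    (hcontr : ε * matrixL2OpNorm' (Bᵀ * Matrix.diagonal E')
        * (⨆ j, max (lam j) (1 - lam j)) * matrixL2OpNorm' B * matrixL2OpNorm' Kε⁻¹ < 1) :
    ∀ Y : Fin n → ℝ, ∃ ustar : Fin n → ℝ,
      ((Bᵀ * Matrix.diagonal E * B).mulVec ustar
        + ε • (Bᵀ * Matrix.diagonal E').mulVec
            (fun j => min ((B.mulVec ustar + d) j) 0) = Y) ∧
      ∀ u : ℕ → Fin n → ℝ,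
        (∀ k : ℕ,
          Kε.mulVec (u (k + 1))
            + ε • (Bᵀ * Matrix.diagonal E').mulVec ((Matrix.diagonal lam).mulVec d)
          = Y - ε • (Bᵀ * Matrix.diagonal E').mulVec
              ((fun j => min ((B.mulVec (u k) + d) j) 0)
                - (Matrix.diagonal lam).mulVec (B.mulVec (u k) + d))) →
        Tendsto u atTop (nhds ustar) ∧
        ∃ C : ℝ, 0 ≤ C ∧ ∃ q : ℝ, q ∈ Set.Ico (0:ℝ) 1 ∧
          ∀ k : ℕ, eucNorm (u k - ustar) ≤ C * q ^ k :=
  stmt_3_general B E E' d lam ε hε Kε hKdef hKunit hcontr
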